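/- arXiv:1410.6323 — 2 statements merged into one kernel-verified Lean document; each statement's English description precedes it below -/
import Mathlib

section
/- The effective coefficients are linear, symmetric and elliptic. Assume A = (a_{ij}) satisfies (L1), (L2) and (L3), and for each M ∈ S^n let γ(M) ∈ ℝ be the unique constant such that a_{ij}(y) D_{ij}w + a_{ij}(y) M_{ij} = γ(M) in ℝⁿ admits a bounded ℤⁿ-periodic C² solution. Then: (i) γ is linear on S^n, i.e. there is a constant matrix (ā_{ij}) with γ(M) = ā_{ij} M_{ij} for all M ∈ S^n; (ii) the matrix (ā_{ij}) is symmetric and elliptic with the same ellipticity constants as (a_{ij}): λ|ξ|² ≤ ā_{ij} ξ_i ξ_j ≤ Λ|ξ|² for all ξ ∈ ℝⁿ. -/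
/-!
At a maximum point of a periodic `C²` function `u` the Hessian is negative semidefinite, so
`a_{ij} D_{ij} u ≤ 0` there, the matrix `A` being positive semidefinite (Schur product theorem).
Applied to the difference of two cell solutions this makes `γ(M)` unique; since sums and
multiples of cell solutions are cell solutions, `γ` is then additive and homogeneous on `Sⁿ`,
hence `γ(M) = ā_{ij} M_{ij}`. For `M = ξ ⊗ ξ`, evaluating the cell equation at a maximum and at a
minimum of a solution `w` gives `a_{ij}(y₁) ξ_i ξ_j ≤ γ(ξ ⊗ ξ) ≤ a_{ij}(y₂) ξ_i ξ_j`, and (L2)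
bounds both sides.
-/

open scoped Matrix.Norms.L2Operator
open Set

noncomputable section

/-- Points of `ℝⁿ` (with the Euclidean norm). -/
abbrev En (n : ℕ) := EuclideanSpace ℝ (Fin n)

/-- Translation of a point of `ℝⁿ` by an integer vector `k ∈ ℤⁿ`. -/
def latticeShift {n : ℕ} (y : En n) (k : Fin n → ℤ) : En n :=
  y + (WithLp.equiv 2 (Fin n → ℝ)).symm (fun i => (k i : ℝ))

/-- `ℤⁿ`-periodicity of a scalar function on `ℝⁿ`. -/
def ZPeriodic {n : ℕ} (w : En n → ℝ) : Prop :=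
  ∀ (y : En n) (k : Fin n → ℤ), w (latticeShift y k) = w y

/-- First partial derivative `D_i u (y)`. -/
def pd1 {n : ℕ} (u : En n → ℝ) (i : Fin n) (y : En n) : ℝ :=
  fderiv ℝ u y (EuclideanSpace.single i 1)

/-- Second partial derivative `D_{ij} u (y)`. -/
def pd2 {n : ℕ} (u : En n → ℝ) (i j : Fin n) (y : En n) : ℝ :=
  iteratedFDeriv ℝ 2 u y ![EuclideanSpace.single i 1, EuclideanSpace.single j 1]

/-- Symmetry of the coefficient matrix `A(y) = (a_{ij}(y))`. -/
def CoeffSymm {n : ℕ} (A : En n → Matrix (Fin n) (Fin n) ℝ) : Prop :=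
  ∀ y : En n, (A y).IsSymm

/-- (L1) `ℤⁿ`-periodicity of the coefficients. -/
def CoeffPeriodic {n : ℕ} (A : En n → Matrix (Fin n) (Fin n) ℝ) : Prop :=
  ∀ (y : En n) (k : Fin n → ℤ), A (latticeShift y k) = A y

/-- (L2) uniform ellipticity: `λ|ξ|² ≤ a_{ij}(y) ξ_i ξ_j ≤ Λ|ξ|²`. -/
def CoeffElliptic {n : ℕ} (lam Lam : ℝ) (A : En n → Matrix (Fin n) (Fin n) ℝ) : Prop :=
  ∀ (y ξ : En n),
    lam * ‖ξ‖ ^ 2 ≤ ∑ i, ∑ j, A y i j * ξ i * ξ j ∧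
      ∑ i, ∑ j, A y i j * ξ i * ξ j ≤ Lam * ‖ξ‖ ^ 2

/-- (L3) each entry of `A` is bounded by `σ` and `α`-Hölder continuous with constant `σ`,
i.e. `‖A‖_{C^{0,α}(ℝⁿ)} ≤ σ`. -/
def CoeffHolder {n : ℕ} (α σ : ℝ) (A : En n → Matrix (Fin n) (Fin n) ℝ) : Prop :=
  ∀ i j : Fin n, (∀ y : En n, |A y i j| ≤ σ) ∧
    ∀ y z : En n, |A y i j - A z i j| ≤ σ * ‖y - z‖ ^ α

/-- Boundedness of a scalar function on `ℝⁿ`. -/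
def IsBoundedFn {n : ℕ} (w : En n → ℝ) : Prop := ∃ K : ℝ, ∀ y : En n, |w y| ≤ K

/-- `‖w‖_{C^{2,α}(ℝⁿ)} ≤ C`: `w` is `C²`, `w`, `Dw`, `D²w` are bounded by `C` and `D²w` is
`α`-Hölder continuous with constant `C`. -/
def C2HolderBound {n : ℕ} (α C : ℝ) (w : En n → ℝ) : Prop :=
  ContDiff ℝ 2 w ∧ (∀ y : En n, |w y| ≤ C) ∧ (∀ y : En n, ‖fderiv ℝ w y‖ ≤ C) ∧
    (∀ y : En n, ‖iteratedFDeriv ℝ 2 w y‖ ≤ C) ∧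
    ∀ y z : En n, ‖iteratedFDeriv ℝ 2 w y - iteratedFDeriv ℝ 2 w z‖ ≤ C * ‖y - z‖ ^ α

/-- Membership in `C^{2,α}(ℝⁿ)`. -/
def MemC2Holder {n : ℕ} (α : ℝ) (w : En n → ℝ) : Prop := ∃ C : ℝ, C2HolderBound α C w

/-- `w` is a bounded `ℤⁿ`-periodic `C²` solution of the cell problem
`a_{ij}(y) D_{ij} w + a_{ij}(y) M_{ij} = γ` in `ℝⁿ`. -/
def CellSol {n : ℕ} (A : En n → Matrix (Fin n) (Fin n) ℝ) (M : Matrix (Fin n) (Fin n) ℝ)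
    (γ : ℝ) (w : En n → ℝ) : Prop :=
  IsBoundedFn w ∧ ZPeriodic w ∧ ContDiff ℝ 2 w ∧
    ∀ y : En n, (∑ i, ∑ j, A y i j * pd2 w i j y) + (∑ i, ∑ j, A y i j * M i j) = γ

open Topology Matrix

theorem Matrix.star_dotProduct_mulVec_eq_sum {ι : Type*} [Fintype ι] (M : Matrix ι ι ℝ)
    (x : ι → ℝ) : star x ⬝ᵥ M *ᵥ x = ∑ i, ∑ j, M i j * x i * x j := by
  simp only [dotProduct, mulVec, star_trivial, Finset.mul_sum]
  exact Finset.sum_congr rfl fun i _ => Finset.sum_congr rfl fun j _ => by ring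

theorem Matrix.exists_isSymm_eq_sum_mul_of_additive {ι : Type*} [Fintype ι] [DecidableEq ι]
    (f : Matrix ι ι ℝ → ℝ) (hadd : ∀ M N, M.IsSymm → N.IsSymm → f (M + N) = f M + f N)
    (hsmul : ∀ (c : ℝ) M, M.IsSymm → f (c • M) = c * f M) :
    ∃ abar : Matrix ι ι ℝ, abar.IsSymm ∧ ∀ M, M.IsSymm → f M = ∑ i, ∑ j, abar i j * M i j := by
  let symmPart (M : Matrix ι ι ℝ) : Matrix ι ι ℝ := (2⁻¹ : ℝ) • (M + Mᵀ)
  have hsymmPart (M : Matrix ι ι ℝ) : (symmPart M).IsSymm := by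
    simp [symmPart, IsSymm, add_comm]
  -- `f ∘ symmPart` is additive and homogeneous on all matrices, hence linear.
  let φ : Matrix ι ι ℝ →ₗ[ℝ] ℝ :=
    { toFun := fun M => f (symmPart M)
      map_add' := fun M N => by
        rw [← hadd _ _ (hsymmPart M) (hsymmPart N)]
        congr 1
        simp only [symmPart, transpose_add]
        module
      map_smul' := fun c M => by
        rw [RingHom.id_apply, smul_eq_mul, ← hsmul c _ (hsymmPart M)]
        congr 1
        simp only [symmPart, transpose_smul]
        module }
  have hφ_transpose (M : Matrix ι ι ℝ) : φ Mᵀ = φ M := by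
    simp [φ, symmPart, add_comm]
  have hφ (M : Matrix ι ι ℝ) : φ M = ∑ i, ∑ j, φ (single i j 1) * M i j := by
    conv_lhs => rw [matrix_eq_sum_single M]
    simp only [map_sum]
    refine Finset.sum_congr rfl fun i _ => Finset.sum_congr rfl fun j _ => ?_
    rw [show single i j (M i j) = M i j • single i j 1 by simp, map_smul, smul_eq_mul, mul_comm]
  refine ⟨of fun i j => φ (single i j 1), ?_, fun M hM => ?_⟩
  · ext i j
    simp [← hφ_transpose (single i j 1)]
  · have hM' : symmPart M = M := by
      simp only [symmPart, hM.eq]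
      module
    calc f M = f (symmPart M) := by rw [hM']
      _ = φ M := rfl
      _ = _ := hφ M

theorem IsLocalMax.deriv_deriv_nonpos {f : ℝ → ℝ} {x₀ : ℝ} (h : IsLocalMax f x₀)
    (hc : ContinuousAt f x₀) : deriv (deriv f) x₀ ≤ 0 := by
  by_contra! hpos
  -- By the second-derivative test `x₀` would also be a local minimum, so `f` is locally constant.
  have hmin : IsLocalMin f x₀ := isLocalMin_of_deriv_deriv_pos hpos h.deriv_eq_zero hc
  have hconst : f =ᶠ[𝓝 x₀] fun _ => f x₀ :=
    (hmin.and h).mono fun _ hx => le_antisymm hx.2 hx.1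
  have hderiv : deriv f =ᶠ[𝓝 x₀] fun _ => 0 := hconst.deriv.trans (by simp)
  simp [hderiv.deriv_eq] at hpos

theorem IsLocalMax.iteratedFDeriv_two_apply_nonpos {E : Type*} [NormedAddCommGroup E]
    [NormedSpace ℝ E] {u : E → ℝ} {y₀ : E} (h : IsLocalMax u y₀) (hu : ContDiff ℝ 2 u)
    (v : E) : iteratedFDeriv ℝ 2 u y₀ ![v, v] ≤ 0 := by
  have hline (t : ℝ) : HasDerivAt (fun s : ℝ => y₀ + s • v) v t := by
    simpa using ((hasDerivAt_id t).smul_const v).const_add y₀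
  have hfirst : deriv (fun t : ℝ => u (y₀ + t • v)) = fun t => fderiv ℝ u (y₀ + t • v) v := by
    funext t
    exact ((hu.differentiable two_ne_zero _).hasFDerivAt.comp_hasDerivAt t (hline t)).deriv
  have hsecond : HasDerivAt (fun t : ℝ => fderiv ℝ u (y₀ + t • v) v)
      (fderiv ℝ (fderiv ℝ u) y₀ v v) 0 := by
    have hD := ((hu.fderiv_right le_rfl).differentiable one_ne_zero y₀).hasFDerivAt
    exact ((ContinuousLinearMap.apply ℝ ℝ v).hasFDerivAt.comp y₀ hD).comp_hasDerivAt_of_eq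
      0 (hline 0) (by simp)
  have hcont : Continuous fun t : ℝ => u (y₀ + t • v) := hu.continuous.comp (by fun_prop)
  have hmax : IsLocalMax (fun t : ℝ => u (y₀ + t • v)) 0 :=
    IsLocalMax.comp_continuous (g := fun t : ℝ => y₀ + t • v) (by simpa using h) (by fun_prop)
  rw [iteratedFDeriv_two_apply]
  simpa [hfirst, hsecond.deriv] using hmax.deriv_deriv_nonpos hcont.continuousAt

theorem pd2_comm {n : ℕ} {u : En n → ℝ} (hu : ContDiff ℝ 2 u) (i j : Fin n) (y : En n) :
    pd2 u i j y = pd2 u j i y := by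
  simp only [pd2, iteratedFDeriv_two_apply]
  exact (hu.contDiffAt.isSymmSndFDerivAt (by simp)).eq _ _

theorem pd2_add {n : ℕ} {u v : En n → ℝ} (hu : ContDiff ℝ 2 u) (hv : ContDiff ℝ 2 v)
    (i j : Fin n) (y : En n) : pd2 (u + v) i j y = pd2 u i j y + pd2 v i j y := by
  simp [pd2, iteratedFDeriv_add_apply hu.contDiffAt hv.contDiffAt]

theorem pd2_const_smul {n : ℕ} {u : En n → ℝ} (hu : ContDiff ℝ 2 u) (c : ℝ)
    (i j : Fin n) (y : En n) : pd2 (c • u) i j y = c * pd2 u i j y := by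
  simp [pd2, iteratedFDeriv_const_smul_apply hu.contDiffAt]

theorem iteratedFDeriv_two_apply_eq_sum_pd2 {n : ℕ} (u : En n → ℝ) (y ξ : En n) :
    iteratedFDeriv ℝ 2 u y ![ξ, ξ] = ∑ i, ∑ j, pd2 u i j y * ξ i * ξ j := by
  have hξ : ξ = ∑ i, ξ i • EuclideanSpace.single i 1 := by
    simpa using ((EuclideanSpace.basisFun (Fin n) ℝ).sum_repr ξ).symm
  simp only [pd2, iteratedFDeriv_two_apply, Matrix.cons_val_zero, Matrix.cons_val_one]
  conv_lhs => rw [hξ]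
  simp only [map_sum, map_smul, _root_.sum_apply, _root_.smul_apply, smul_eq_mul,
    Finset.mul_sum]
  rw [Finset.sum_comm]
  exact Finset.sum_congr rfl fun i _ => Finset.sum_congr rfl fun j _ => by ring

theorem IsLocalMax.sum_mul_pd2_nonpos {n : ℕ} {u : En n → ℝ} {y₀ : En n}
    (h : IsLocalMax u y₀) (hu : ContDiff ℝ 2 u) {a : Matrix (Fin n) (Fin n) ℝ}
    (ha : a.PosSemidef) : ∑ i, ∑ j, a i j * pd2 u i j y₀ ≤ 0 := by
  set H : Matrix (Fin n) (Fin n) ℝ := of fun i j => -pd2 u i j y₀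
  have hH : H.PosSemidef := by
    refine .of_dotProduct_mulVec_nonneg ?_ fun x => ?_
    · ext i j
      simp [H, pd2_comm hu i j]
    · have := h.iteratedFDeriv_two_apply_nonpos hu (WithLp.toLp 2 x)
      rw [iteratedFDeriv_two_apply_eq_sum_pd2] at this
      rw [star_dotProduct_mulVec_eq_sum]
      simpa [H] using this
  have := (ha.hadamard hH).dotProduct_mulVec_nonneg (fun _ => 1)
  simp [H, dotProduct, mulVec, hadamard] at this
  linarith

theorem latticeShift_neg_floor {n : ℕ} (y : En n) :
    latticeShift y (fun i => -⌊y i⌋) = WithLp.toLp 2 fun i => Int.fract (y i) := by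
  ext i
  simp [latticeShift, ← sub_eq_add_neg]

theorem ZPeriodic.exists_forall_ge {n : ℕ} {u : En n → ℝ} (hper : ZPeriodic u)
    (hu : Continuous u) : ∃ y₀, ∀ y, u y ≤ u y₀ := by
  set K : Set (En n) := WithLp.toLp 2 '' Set.univ.pi fun _ => Icc 0 1
  have hK : IsCompact K :=
    (isCompact_univ_pi fun _ => isCompact_Icc).image (PiLp.continuous_toLp 2 _)
  have hK₀ : K.Nonempty := (univ_pi_nonempty_iff.2 fun _ => nonempty_Icc.2 zero_le_one).image _
  obtain ⟨y₀, -, hy₀⟩ := hK.exists_isMaxOn hK₀ hu.continuousOn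
  refine ⟨y₀, fun y => ?_⟩
  rw [← hper y fun i => -⌊y i⌋, latticeShift_neg_floor]
  exact hy₀ ⟨_, fun i _ => ⟨Int.fract_nonneg _, (Int.fract_lt_one _).le⟩, rfl⟩

theorem ZPeriodic.exists_sum_mul_pd2_nonpos {n : ℕ} {A : En n → Matrix (Fin n) (Fin n) ℝ}
    (hA : ∀ y, (A y).PosSemidef) {u : En n → ℝ} (hper : ZPeriodic u) (hu : ContDiff ℝ 2 u) :
    ∃ y₀, ∑ i, ∑ j, A y₀ i j * pd2 u i j y₀ ≤ 0 := by
  obtain ⟨y₀, hy₀⟩ := hper.exists_forall_ge hu.continuous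
  exact ⟨y₀, IsLocalMax.sum_mul_pd2_nonpos (.of_forall hy₀) hu (hA y₀)⟩

theorem CoeffElliptic.posSemidef {n : ℕ} {lam Lam : ℝ} {A : En n → Matrix (Fin n) (Fin n) ℝ}
    (hAell : CoeffElliptic lam Lam A) (hlam : 0 ≤ lam) (hAsymm : CoeffSymm A) (y : En n) :
    (A y).PosSemidef := by
  refine .of_dotProduct_mulVec_nonneg (hAsymm y) fun x => ?_
  rw [star_dotProduct_mulVec_eq_sum]
  exact le_trans (by positivity) (hAell y (WithLp.toLp 2 x)).1

namespace CellSol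

variable {n : ℕ} {A : En n → Matrix (Fin n) (Fin n) ℝ} {M N : Matrix (Fin n) (Fin n) ℝ}
  {γ γ₁ γ₂ : ℝ} {w w₁ w₂ : En n → ℝ}

theorem add (h₁ : CellSol A M γ₁ w₁) (h₂ : CellSol A N γ₂ w₂) :
    CellSol A (M + N) (γ₁ + γ₂) (w₁ + w₂) := by
  obtain ⟨⟨K₁, hK₁⟩, hper₁, hc₁, heq₁⟩ := h₁
  obtain ⟨⟨K₂, hK₂⟩, hper₂, hc₂, heq₂⟩ := h₂
  refine ⟨⟨K₁ + K₂, fun y => (abs_add_le _ _).trans (add_le_add (hK₁ y) (hK₂ y))⟩,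
    fun y k => by simp [hper₁ y k, hper₂ y k], hc₁.add hc₂, fun y => ?_⟩
  rw [← heq₁ y, ← heq₂ y]
  simp only [pd2_add hc₁ hc₂, Matrix.add_apply, mul_add, Finset.sum_add_distrib]
  ring

theorem smul (h : CellSol A M γ w) (c : ℝ) : CellSol A (c • M) (c * γ) (c • w) := by
  obtain ⟨⟨K, hK⟩, hper, hc, heq⟩ := h
  refine ⟨⟨|c| * K, fun y => ?_⟩, fun y k => by simp [hper y k], hc.const_smul c, fun y => ?_⟩
  · simpa [abs_mul] using mul_le_mul_of_nonneg_left (hK y) (abs_nonneg c)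
  · rw [← heq y]
    simp only [pd2_const_smul hc, Matrix.smul_apply, smul_eq_mul, mul_left_comm _ c,
      ← Finset.mul_sum, ← mul_add]

theorem exists_le (hA : ∀ y, (A y).PosSemidef) (h : CellSol A M γ w) :
    ∃ y, γ ≤ ∑ i, ∑ j, A y i j * M i j := by
  obtain ⟨y, hy⟩ := h.2.1.exists_sum_mul_pd2_nonpos hA h.2.2.1
  exact ⟨y, by linarith [h.2.2.2 y]⟩

theorem exists_ge (hA : ∀ y, (A y).PosSemidef) (h : CellSol A M γ w) :
    ∃ y, ∑ i, ∑ j, A y i j * M i j ≤ γ := by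
  obtain ⟨y, hy⟩ := (h.smul (-1)).exists_le hA
  refine ⟨y, ?_⟩
  simp only [Matrix.smul_apply, smul_eq_mul, neg_one_mul, mul_neg, Finset.sum_neg_distrib] at hy
  linarith

theorem unique (hA : ∀ y, (A y).PosSemidef) (h₁ : CellSol A M γ₁ w₁)
    (h₂ : CellSol A M γ₂ w₂) : γ₁ = γ₂ := by
  have h := h₁.add (h₂.smul (-1))
  rw [neg_one_smul, add_neg_cancel] at h
  obtain ⟨y₁, hy₁⟩ := h.exists_le hA
  obtain ⟨y₂, hy₂⟩ := h.exists_ge hA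
  simp only [Matrix.zero_apply, mul_zero, Finset.sum_const_zero] at hy₁ hy₂
  linarith

end CellSol

theorem effective_coefficients_linear_symmetric_elliptic_general
    (n : ℕ) (lam Lam : ℝ)
    (hlam : 0 < lam)
    (A : En n → Matrix (Fin n) (Fin n) ℝ)
    (hAsymm : CoeffSymm A)
    (hAell : CoeffElliptic lam Lam A)
    (γ : Matrix (Fin n) (Fin n) ℝ → ℝ)
    (hγ : ∀ M : Matrix (Fin n) (Fin n) ℝ, M.IsSymm → ∃ w : En n → ℝ, CellSol A M (γ M) w) :
    ∃ abar : Matrix (Fin n) (Fin n) ℝ,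
      abar.IsSymm ∧
      (∀ M : Matrix (Fin n) (Fin n) ℝ, M.IsSymm → γ M = ∑ i, ∑ j, abar i j * M i j) ∧
      ∀ ξ : En n,
        lam * ‖ξ‖ ^ 2 ≤ ∑ i, ∑ j, abar i j * ξ i * ξ j ∧
          ∑ i, ∑ j, abar i j * ξ i * ξ j ≤ Lam * ‖ξ‖ ^ 2 := by
  have hA := hAell.posSemidef hlam.le hAsymm
  have hadd (M N : Matrix (Fin n) (Fin n) ℝ) (hM : M.IsSymm) (hN : N.IsSymm) :
      γ (M + N) = γ M + γ N := by
    obtain ⟨w₁, hw₁⟩ := hγ M hM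
    obtain ⟨w₂, hw₂⟩ := hγ N hN
    obtain ⟨w, hw⟩ := hγ _ (hM.add hN)
    exact hw.unique hA (hw₁.add hw₂)
  have hsmul (c : ℝ) (M : Matrix (Fin n) (Fin n) ℝ) (hM : M.IsSymm) : γ (c • M) = c * γ M := by
    obtain ⟨w₁, hw₁⟩ := hγ M hM
    obtain ⟨w, hw⟩ := hγ _ (hM.smul c)
    exact hw.unique hA (hw₁.smul c)
  obtain ⟨abar, habar, hγ_eq⟩ := exists_isSymm_eq_sum_mul_of_additive γ hadd hsmul
  refine ⟨abar, habar, hγ_eq, fun ξ => ?_⟩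
  have hξ : (vecMulVec ξ ξ).IsSymm := by simp [IsSymm, transpose_vecMulVec]
  have hquad (B : Matrix (Fin n) (Fin n) ℝ) :
      ∑ i, ∑ j, B i j * vecMulVec ξ ξ i j = ∑ i, ∑ j, B i j * ξ i * ξ j := by
    simp [vecMulVec_apply, mul_assoc]
  obtain ⟨w, hw⟩ := hγ _ hξ
  obtain ⟨y₁, hy₁⟩ := hw.exists_ge hA
  obtain ⟨y₂, hy₂⟩ := hw.exists_le hA
  simp only [hγ_eq _ hξ, hquad] at hy₁ hy₂
  exact ⟨(hAell y₁ ξ).1.trans hy₁, hy₂.trans (hAell y₂ ξ).2⟩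

/-- **The effective coefficients are linear, symmetric and elliptic.** If `γ(M)` denotes the
unique constant for which the cell problem with datum `M ∈ Sⁿ` is solvable, then
`γ(M) = ā_{ij} M_{ij}` for a constant symmetric matrix `(ā_{ij})` which is elliptic with the
same constants `λ, Λ`. -/
theorem effective_coefficients_linear_symmetric_elliptic
    (n : ℕ) (hn : 1 ≤ n) (lam Lam σ α : ℝ)
    (hlam : 0 < lam) (hlamLam : lam ≤ Lam) (hσ : 0 < σ) (hα : α ∈ Set.Ioc (0:ℝ) 1)
    (A : En n → Matrix (Fin n) (Fin n) ℝ)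
    (hAsymm : CoeffSymm A) (hAper : CoeffPeriodic A)
    (hAell : CoeffElliptic lam Lam A) (hAhold : CoeffHolder α σ A)
    (γ : Matrix (Fin n) (Fin n) ℝ → ℝ)
    (hγ : ∀ M : Matrix (Fin n) (Fin n) ℝ, M.IsSymm → ∃ w : En n → ℝ, CellSol A M (γ M) w) :
    ∃ abar : Matrix (Fin n) (Fin n) ℝ,
      abar.IsSymm ∧
      (∀ M : Matrix (Fin n) (Fin n) ℝ, M.IsSymm → γ M = ∑ i, ∑ j, abar i j * M i j) ∧
      ∀ ξ : En n,
        lam * ‖ξ‖ ^ 2 ≤ ∑ i, ∑ j, abar i j * ξ i * ξ j ∧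
          ∑ i, ∑ j, abar i j * ξ i * ξ j ≤ Lam * ‖ξ‖ ^ 2 :=
  effective_coefficients_linear_symmetric_elliptic_general n lam Lam hlam A hAsymm hAell γ hγ
end
end

section
/- Ellipticity and concavity of the effective operator. Assume F satisfies (F1)–(F4). Then: (i) F̄ is uniformly elliptic with the same constants as F, i.e. for all M, N ∈ S^n with N positive semidefinite and all x ∈ Ω̄, λ‖N‖ ≤ F̄(M+N,x) − F̄(M,x) ≤ Λ‖N‖; (ii) for each x ∈ Ω̄ the map M ↦ F̄(M,x) is concave on S^n. -/
open scoped Matrix.Norms.L2Operator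
open Set

noncomputable section

/-- `n × n` real matrices, carrying the `ℓ² → ℓ²` operator norm. -/
abbrev Mat (n : ℕ) := Matrix (Fin n) (Fin n) ℝ

/-- The Hessian matrix `D²u(y)`. -/
def hess {n : ℕ} (u : En n → ℝ) (y : En n) : Mat n :=
  Matrix.of fun i j => pd2 u i j y

/-- (F1) `ℤⁿ`-periodicity of `F` in the fast variable. -/
def FPeriodic {n : ℕ} (Ω : Set (En n)) (F : Mat n → En n → En n → ℝ) : Prop :=
  ∀ (M : Mat n), ∀ x ∈ closure Ω, ∀ (y : En n) (k : Fin n → ℤ),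
    F M x (latticeShift y k) = F M x y

/-- (F2) uniform ellipticity of `F` with constants `λ ≤ Λ`. -/
def FElliptic {n : ℕ} (Ω : Set (En n)) (lam Lam : ℝ) (F : Mat n → En n → En n → ℝ) : Prop :=
  ∀ (M N : Mat n), ∀ x ∈ closure Ω, ∀ y : En n, N.PosSemidef →
    lam * ‖N‖ ≤ F (M + N) x y - F M x y ∧ F (M + N) x y - F M x y ≤ Lam * ‖N‖

/-- (F4) concavity of `F` in the matrix variable. -/
def FConcave {n : ℕ} (Ω : Set (En n)) (F : Mat n → En n → En n → ℝ) : Prop :=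
  ∀ x ∈ closure Ω, ∀ y : En n, ConcaveOn ℝ Set.univ (fun M : Mat n => F M x y)

/-- Admissibility of the modulus `τ` in (F3): nondecreasing, `≥ 1`, and
`τ_{‖M‖} ≤ σ (1 + ‖M‖)`. -/
def TauAdmissible (σ : ℝ) (τ : ℝ → ℝ) : Prop :=
  (∀ s t : ℝ, 0 < s → s ≤ t → τ s ≤ τ t) ∧ (∀ L : ℝ, 0 < L → 1 ≤ τ L) ∧
    ∀ r : ℝ, 0 ≤ r → τ r ≤ σ * (1 + r)

/-- (F3), Lipschitz form: for every `L > 0`, `F` is bounded by `τ L` and `τ L`-Lipschitz on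
`B̄_L × Ω̄ × ℝⁿ`. -/
def FLipschitz {n : ℕ} (Ω : Set (En n)) (τ : ℝ → ℝ) (F : Mat n → En n → En n → ℝ) : Prop :=
  ∀ L : ℝ, 0 < L →
    (∀ (M : Mat n), ∀ x ∈ closure Ω, ∀ y : En n, ‖M‖ ≤ L → |F M x y| ≤ τ L) ∧
    ∀ (M M' : Mat n) (x x' y y' : En n), ‖M‖ ≤ L → ‖M'‖ ≤ L →
      x ∈ closure Ω → x' ∈ closure Ω →
      |F M x y - F M' x' y'| ≤ τ L * (‖M - M'‖ + ‖x - x'‖ + ‖y - y'‖)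

/-- `w` is a bounded `ℤⁿ`-periodic `C²` solution of the cell problem
`F(D²_y w + M, x, y) = γ` in `ℝⁿ`. -/
def NLCellSol {n : ℕ} (F : Mat n → En n → En n → ℝ) (M : Mat n) (x : En n)
    (γ : ℝ) (w : En n → ℝ) : Prop :=
  IsBoundedFn w ∧ ZPeriodic w ∧ ContDiff ℝ 2 w ∧
    ∀ y : En n, F (hess w y + M) x y = γ

/-- `w` is a bounded `ℤⁿ`-periodic `C²` solution of the penalized cell problem
`F(D²_y w + M, x, y) - δ w = 0` in `ℝⁿ`. -/
def NLPenSol {n : ℕ} (F : Mat n → En n → En n → ℝ) (M : Mat n) (x : En n)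
    (δ : ℝ) (w : En n → ℝ) : Prop :=
  IsBoundedFn w ∧ ZPeriodic w ∧ ContDiff ℝ 2 w ∧
    ∀ y : En n, F (hess w y + M) x y - δ * w y = 0

/-! The effective operator inherits the monotonicity, ellipticity and concavity of `F` through a
comparison of cell correctors: if `w` solves `F(D²w + M, x, ·) = γ` and `v` is a periodic `C²`
function with `F(D²v + M, x, ·) ≥ γ'`, then at a minimum point of `w - v` on the torus
`D²w ≥ D²v`, and monotonicity of `F` gives `γ' ≤ γ`. Comparing the correctors of `M + N` and `M`
gives ellipticity; comparing the corrector of `a M₁ + b M₂` with `a w₁ + b w₂` gives concavity. -/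

open Filter Topology

theorem IsLocalMin.deriv_deriv_nonneg {f : ℝ → ℝ} {a : ℝ} (h : IsLocalMin f a)
    (hc : ContinuousAt f a) : 0 ≤ deriv (deriv f) a := by
  by_contra! hneg
  -- a negative second derivative would make `a` also a local maximum, so `f` is locally constant
  have hmax := isLocalMax_of_deriv_deriv_neg hneg h.deriv_eq_zero hc
  have hconst : f =ᶠ[𝓝 a] fun _ => f a := (h.and hmax).mono fun _ hx => le_antisymm hx.2 hx.1
  have hzero : deriv (deriv f) a = 0 := by
    rw [hconst.deriv.deriv_eq]
    simp
  exact hneg.ne hzero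

section Line

variable {E : Type*} [NormedAddCommGroup E] [NormedSpace ℝ E] {w : E → ℝ}

theorem deriv_deriv_comp_line (hw : ContDiff ℝ 2 w) (y u : E) :
    deriv (deriv fun t : ℝ => w (y + t • u)) 0 = fderiv ℝ (fderiv ℝ w) y u u := by
  have hline : ∀ t : ℝ, HasDerivAt (fun t : ℝ => y + t • u) u t := fun t => by
    simpa using ((hasDerivAt_id t).smul_const u).const_add y
  have hfirst : deriv (fun t : ℝ => w (y + t • u)) = fun t => fderiv ℝ w (y + t • u) u :=
    funext fun t =>
      ((hw.differentiable (by norm_num) _).hasFDerivAt.comp_hasDerivAt t (hline t)).deriv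
  have hB : HasFDerivAt (fderiv ℝ w) (fderiv ℝ (fderiv ℝ w) y) (y + (0 : ℝ) • u) := by
    rw [zero_smul, add_zero]
    exact ((hw.fderiv_right (m := 1) (by norm_num)).differentiable (by norm_num) y).hasFDerivAt
  have hcomp : HasDerivAt (fun t : ℝ => fderiv ℝ w (y + t • u)) (fderiv ℝ (fderiv ℝ w) y u) 0 :=
    hB.comp_hasDerivAt (x := (0 : ℝ)) (hline 0)
  have hsecond := hcomp.clm_apply (hasDerivAt_const (0 : ℝ) u)
  rw [hfirst, hsecond.deriv]
  simp

theorem IsLocalMin.fderiv_fderiv_nonneg {y : E} (h : IsLocalMin w y) (hw : ContDiff ℝ 2 w)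
    (u : E) : 0 ≤ fderiv ℝ (fderiv ℝ w) y u u := by
  rw [← deriv_deriv_comp_line hw y u]
  have hline : Continuous fun t : ℝ => y + t • u := by fun_prop
  refine IsLocalMin.deriv_deriv_nonneg ?_ (hw.continuous.comp hline).continuousAt
  exact IsLocalMin.comp_continuous (by simpa using h) hline.continuousAt

end Line

section Hessian

open scoped Matrix

variable {n : ℕ} {f g w : En n → ℝ}

theorem hess_apply (y : En n) (i j : Fin n) :
    hess w y i j =
      fderiv ℝ (fderiv ℝ w) y (EuclideanSpace.single i 1) (EuclideanSpace.single j 1) := by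
  simp [hess, pd2, iteratedFDeriv_two_apply]

theorem dotProduct_hess_mulVec (y : En n) (v : Fin n → ℝ) :
    v ⬝ᵥ hess w y *ᵥ v =
      fderiv ℝ (fderiv ℝ w) y (WithLp.toLp 2 v) (WithLp.toLp 2 v) := by
  have hv : WithLp.toLp 2 v = ∑ i, v i • EuclideanSpace.single i (1 : ℝ) := by
    ext i
    simp [Pi.single_apply]
  simp only [hv, map_sum, map_smul, FunLike.coe_sum, Finset.sum_apply,
    FunLike.coe_smul, Pi.smul_apply, smul_eq_mul, dotProduct, Matrix.mulVec, hess_apply,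
    Finset.mul_sum]
  rw [Finset.sum_comm]
  exact Finset.sum_congr rfl fun i _ => Finset.sum_congr rfl fun j _ => by ring

theorem hess_isHermitian (hw : ContDiff ℝ 2 w) (y : En n) :
    (hess w y).IsHermitian := by
  ext i j
  simp only [Matrix.conjTranspose_apply, star_trivial, hess_apply]
  exact hw.contDiffAt.isSymmSndFDerivAt (by simp) _ _

theorem IsLocalMin.hess_posSemidef {y : En n} (h : IsLocalMin w y)
    (hw : ContDiff ℝ 2 w) : (hess w y).PosSemidef := by
  refine Matrix.posSemidef_iff_dotProduct_mulVec.2 ⟨hess_isHermitian hw y, fun v => ?_⟩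
  rw [star_trivial, dotProduct_hess_mulVec]
  exact h.fderiv_fderiv_nonneg hw _

theorem hess_add (hf : ContDiff ℝ 2 f) (hg : ContDiff ℝ 2 g) (y : En n) :
    hess (f + g) y = hess f y + hess g y := by
  ext i j
  simp [hess, pd2, iteratedFDeriv_add_apply hf.contDiffAt hg.contDiffAt]

theorem hess_sub (hf : ContDiff ℝ 2 f) (hg : ContDiff ℝ 2 g) (y : En n) :
    hess (f - g) y = hess f y - hess g y := by
  ext i j
  simp [hess, pd2, iteratedFDeriv_sub_apply hf.contDiffAt hg.contDiffAt]

theorem hess_const_smul (c : ℝ) (hw : ContDiff ℝ 2 w) (y : En n) :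
    hess (c • w) y = c • hess w y := by
  ext i j
  simp [hess, pd2, iteratedFDeriv_const_smul_apply hw.contDiffAt]

end Hessian

section Periodic

variable {n : ℕ} {u v w : En n → ℝ}

theorem ZPeriodic.sub (hu : ZPeriodic u) (hv : ZPeriodic v) : ZPeriodic (u - v) :=
  fun y k => by simp only [Pi.sub_apply, hu y k, hv y k]

theorem ZPeriodic.add (hu : ZPeriodic u) (hv : ZPeriodic v) : ZPeriodic (u + v) :=
  fun y k => by simp only [Pi.add_apply, hu y k, hv y k]

theorem ZPeriodic.const_smul (c : ℝ) (hw : ZPeriodic w) : ZPeriodic (c • w) :=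
  fun y k => by simp only [Pi.smul_apply, hw y k]

/-- Every point of `ℝⁿ` is a lattice translate of a point of the compact cube `[0,1]ⁿ`. -/
theorem ZPeriodic.exists_forall_le (hc : Continuous w) (hp : ZPeriodic w) :
    ∃ y₀ : En n, ∀ y, w y₀ ≤ w y := by
  set K : Set (En n) := WithLp.toLp 2 '' univ.pi fun _ => Icc (0 : ℝ) 1
  have hK : IsCompact K :=
    (isCompact_univ_pi fun _ => isCompact_Icc).image (PiLp.continuous_toLp _ _)
  have hne : K.Nonempty := ⟨_, ⟨fun _ => 0, fun _ _ => ⟨le_rfl, zero_le_one⟩, rfl⟩⟩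
  obtain ⟨y₀, -, hy₀⟩ := hK.exists_isMinOn hne hc.continuousOn
  refine ⟨y₀, fun y => ?_⟩
  have hfract : latticeShift y (fun i => -⌊y i⌋) ∈ K := by
    refine ⟨fun i => Int.fract (y i), fun i _ => ⟨Int.fract_nonneg _, (Int.fract_lt_one _).le⟩, ?_⟩
    ext i
    simp [latticeShift, Int.fract, sub_eq_add_neg]
  calc w y₀ ≤ w (latticeShift y fun i => -⌊y i⌋) := hy₀ hfract
    _ = w y := hp y _

theorem exists_hess_sub_posSemidef (hu : ContDiff ℝ 2 u) (hv : ContDiff ℝ 2 v)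
    (hup : ZPeriodic u) (hvp : ZPeriodic v) :
    ∃ y₀ : En n, (hess u y₀ - hess v y₀).PosSemidef := by
  obtain ⟨y₀, hy₀⟩ := (hup.sub hvp).exists_forall_le (hu.continuous.sub hv.continuous)
  refine ⟨y₀, ?_⟩
  rw [← hess_sub hu hv]
  exact IsLocalMin.hess_posSemidef (Eventually.of_forall hy₀) (hu.sub hv)

end Periodic

section CellProblem

variable {n : ℕ} {F : Mat n → En n → En n → ℝ} {x : En n}

theorem FElliptic.le_add_of_posSemidef {Ω : Set (En n)} {lam Lam : ℝ}
    (hF : FElliptic Ω lam Lam F) (hlam : 0 ≤ lam) (hx : x ∈ closure Ω) (A H : Mat n) (y : En n)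
    (hH : H.PosSemidef) : F A x y ≤ F (A + H) x y := by
  linarith [(hF A H x hx y hH).1, mul_nonneg hlam (norm_nonneg H)]

theorem le_of_periodic_subsolution
    (hmono : ∀ (A H : Mat n) (y : En n), H.PosSemidef → F A x y ≤ F (A + H) x y)
    {M : Mat n} {γ γ' : ℝ} {w v : En n → ℝ} (hwp : ZPeriodic w) (hwc : ContDiff ℝ 2 w)
    (hw : ∀ y, F (hess w y + M) x y = γ) (hvp : ZPeriodic v) (hvc : ContDiff ℝ 2 v)
    (hv : ∀ y, γ' ≤ F (hess v y + M) x y) : γ' ≤ γ := by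
  obtain ⟨y₀, hH⟩ := exists_hess_sub_posSemidef hwc hvc hwp hvp
  calc γ' ≤ F (hess v y₀ + M) x y₀ := hv y₀
    _ ≤ F (hess v y₀ + M + (hess w y₀ - hess v y₀)) x y₀ := hmono _ _ _ hH
    _ = γ := by rw [← hw y₀]; congr 1; abel

theorem FElliptic.nlCellSol_add_sub_bounds {Ω : Set (En n)} {lam Lam : ℝ}
    (hF : FElliptic Ω lam Lam F) (hlam : 0 ≤ lam) (hx : x ∈ closure Ω) {M N : Mat n}
    (hN : N.PosSemidef) {γ₁ γ₀ : ℝ} {w₁ w₀ : En n → ℝ} (h₁ : NLCellSol F (M + N) x γ₁ w₁)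
    (h₀ : NLCellSol F M x γ₀ w₀) : lam * ‖N‖ ≤ γ₁ - γ₀ ∧ γ₁ - γ₀ ≤ Lam * ‖N‖ := by
  obtain ⟨-, hp₁, hc₁, heq₁⟩ := h₁
  obtain ⟨-, hp₀, hc₀, heq₀⟩ := h₀
  have hmono := hF.le_add_of_posSemidef hlam hx
  constructor
  · suffices γ₀ + lam * ‖N‖ ≤ γ₁ by linarith
    refine le_of_periodic_subsolution hmono hp₁ hc₁ heq₁ hp₀ hc₀ fun y => ?_
    rw [← add_assoc, ← heq₀ y]
    linarith [(hF (hess w₀ y + M) N x hx y hN).1]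
  · suffices γ₁ - Lam * ‖N‖ ≤ γ₀ by linarith
    refine le_of_periodic_subsolution hmono hp₀ hc₀ heq₀ hp₁ hc₁ fun y => ?_
    rw [← heq₁ y, ← add_assoc]
    linarith [(hF (hess w₁ y + M) N x hx y hN).2]

theorem FConcave.nlCellSol_smul_add_smul_le {Ω : Set (En n)} (hF : FConcave Ω F)
    (hmono : ∀ (A H : Mat n) (y : En n), H.PosSemidef → F A x y ≤ F (A + H) x y)
    (hx : x ∈ closure Ω) {M₁ M₂ : Mat n} {a b γ₁ γ₂ γ : ℝ} (ha : 0 ≤ a) (hb : 0 ≤ b)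
    (hab : a + b = 1) {w₁ w₂ w : En n → ℝ} (h₁ : NLCellSol F M₁ x γ₁ w₁)
    (h₂ : NLCellSol F M₂ x γ₂ w₂) (h : NLCellSol F (a • M₁ + b • M₂) x γ w) :
    a * γ₁ + b * γ₂ ≤ γ := by
  obtain ⟨-, hp₁, hc₁, heq₁⟩ := h₁
  obtain ⟨-, hp₂, hc₂, heq₂⟩ := h₂
  obtain ⟨-, hp, hc, heq⟩ := h
  have hc₁' : ContDiff ℝ 2 (a • w₁) := hc₁.const_smul a
  have hc₂' : ContDiff ℝ 2 (b • w₂) := hc₂.const_smul b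
  refine le_of_periodic_subsolution hmono hp hc heq ((hp₁.const_smul a).add (hp₂.const_smul b))
    (hc₁'.add hc₂') fun y => ?_
  have hsplit : hess (a • w₁ + b • w₂) y + (a • M₁ + b • M₂)
      = a • (hess w₁ y + M₁) + b • (hess w₂ y + M₂) := by
    rw [hess_add hc₁' hc₂', hess_const_smul a hc₁, hess_const_smul b hc₂]
    module
  rw [hsplit, ← heq₁ y, ← heq₂ y]
  exact (hF x hx y).2 (mem_univ _) (mem_univ _) ha hb hab

end CellProblem


theorem effective_operator_elliptic_concave_general
    (n : ℕ) (lam Lam : ℝ)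
    (hlam : 0 < lam)
    (Ω : Set (En n))
    (F : Mat n → En n → En n → ℝ)
    (hFell : FElliptic Ω lam Lam F) (hFcon : FConcave Ω F)
    (Fbar : Mat n → En n → ℝ)
    (hFbar : ∀ (M : Mat n), ∀ x ∈ closure Ω, ∃ w : En n → ℝ, NLCellSol F M x (Fbar M x) w)
    :
    (∀ (M N : Mat n), ∀ x ∈ closure Ω, N.PosSemidef →
      lam * ‖N‖ ≤ Fbar (M + N) x - Fbar M x ∧ Fbar (M + N) x - Fbar M x ≤ Lam * ‖N‖) ∧
    ∀ x ∈ closure Ω, ConcaveOn ℝ Set.univ (fun M : Mat n => Fbar M x) := by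
  refine ⟨fun M N x hx hN => ?_, fun x hx => ⟨convex_univ, fun M₁ _ M₂ _ a b ha hb hab => ?_⟩⟩
  · obtain ⟨w₁, hw₁⟩ := hFbar (M + N) x hx
    obtain ⟨w₀, hw₀⟩ := hFbar M x hx
    exact hFell.nlCellSol_add_sub_bounds hlam.le hx hN hw₁ hw₀
  · obtain ⟨w₁, hw₁⟩ := hFbar M₁ x hx
    obtain ⟨w₂, hw₂⟩ := hFbar M₂ x hx
    obtain ⟨w, hw⟩ := hFbar (a • M₁ + b • M₂) x hx
    exact hFcon.nlCellSol_smul_add_smul_le (hFell.le_add_of_posSemidef hlam.le hx) hx ha hb hab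
      hw₁ hw₂ hw

/-- **Ellipticity and concavity of the effective operator.** `F̄` is uniformly elliptic with
the same constants `λ, Λ` as `F`, and `M ↦ F̄(M,x)` is concave for each `x ∈ Ω̄`. -/
theorem effective_operator_elliptic_concave
    (n : ℕ) (hn : 1 ≤ n) (lam Lam σ : ℝ)
    (hlam : 0 < lam) (hlamLam : lam ≤ Lam) (hσ : 0 < σ)
    (Ω : Set (En n)) (hΩo : IsOpen Ω) (hΩconn : IsConnected Ω)
    (hΩb : Bornology.IsBounded Ω)
    (F : Mat n → En n → En n → ℝ) (τ : ℝ → ℝ) (hτ : TauAdmissible σ τ)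
    (hFper : FPeriodic Ω F) (hFell : FElliptic Ω lam Lam F)
    (hFlip : FLipschitz Ω τ F) (hFcon : FConcave Ω F)
    (Fbar : Mat n → En n → ℝ)
    (hFbar : ∀ (M : Mat n), ∀ x ∈ closure Ω, ∃ w : En n → ℝ, NLCellSol F M x (Fbar M x) w)
    :
    (∀ (M N : Mat n), ∀ x ∈ closure Ω, N.PosSemidef →
      lam * ‖N‖ ≤ Fbar (M + N) x - Fbar M x ∧ Fbar (M + N) x - Fbar M x ≤ Lam * ‖N‖) ∧
    ∀ x ∈ closure Ω, ConcaveOn ℝ Set.univ (fun M : Mat n => Fbar M x) :=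
  effective_operator_elliptic_concave_general n lam Lam hlam Ω F hFell hFcon Fbar hFbar
end
end
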